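/- arXiv:0709.0467 — 4 statements merged into one kernel-verified Lean document; each statement's English description precedes it below -/
import Mathlib

section
/- Let (g,J) be a Lie algebra with almost complex structure and (E,I) an integrable (g,J)-module via ρ. Then the map δ : g^{0,1} × E^{1,0} → E^{1,0}, δ(X̄, V) = pr^{1,0}(ρ(X̄)V) (the (1,0)-component of ρ(X̄)V), is a ℂ-linear Lie algebra representation of g^{0,1} on E^{1,0}, i.e. δ([X̄,Ȳ],V) = δ(X̄, δ(Ȳ,V)) − δ(Ȳ, δ(X̄,V)). -/
/-!
Write `E_ℂ = E^{1,0} ⊕ E^{0,1}`. Complex conjugation on `g_ℂ` and `E_ℂ` is compatible with the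
complexified representation and swaps the `±i`-eigenspaces, so integrability (`g^{1,0}` preserves
`E^{1,0}`) gives that `g^{0,1}` preserves `E^{0,1} = ker pr`. Hence for `X̄ ∈ g^{0,1}` we get
`pr (ρ(X̄) (pr w)) = pr (ρ(X̄) w)`, and the representation identity for `δ` reduces to the one for
the complexified representation `ρ_ℂ`.
-/

open TensorProduct

attribute [local instance 100] LieRing.ofAssociativeRing

/-- The complexification of a representation `ρ : g → End(E)`. -/
noncomputable def repComplexification (g E : Type) [LieRing g] [LieAlgebra ℝ g]
    [AddCommGroup E] [Module ℝ E] (ρ : g →ₗ⁅ℝ⁆ Module.End ℝ E) :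
    (ℂ ⊗[ℝ] g) →ₗ[ℂ] Module.End ℂ (ℂ ⊗[ℝ] E) :=
  LinearMap.liftBaseChange ℂ ((LinearMap.baseChangeHom ℝ ℂ E E).comp ρ.toLinearMap)

noncomputable def conjTensor (M : Type) [AddCommGroup M] [Module ℝ M] :
    (ℂ ⊗[ℝ] M) →ₗ[ℝ] (ℂ ⊗[ℝ] M) :=
  TensorProduct.map Complex.conjAe.toLinearMap LinearMap.id

section conjTensor

variable {M N : Type} [AddCommGroup M] [Module ℝ M] [AddCommGroup N] [Module ℝ N]

@[simp]
lemma conjTensor_tmul (c : ℂ) (m : M) :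
    conjTensor M (c ⊗ₜ[ℝ] m) = (starRingEnd ℂ c) ⊗ₜ[ℝ] m := rfl

@[simp]
lemma conjTensor_conjTensor (w : ℂ ⊗[ℝ] M) : conjTensor M (conjTensor M w) = w := by
  induction w using TensorProduct.induction_on with
  | zero => simp
  | tmul c m => simp
  | add x y hx hy => simp [hx, hy]

lemma conjTensor_smul (c : ℂ) (w : ℂ ⊗[ℝ] M) :
    conjTensor M (c • w) = (starRingEnd ℂ c) • conjTensor M w := by
  induction w using TensorProduct.induction_on with
  | zero => simp
  | tmul d m => simp [smul_tmul']
  | add x y hx hy => simp [smul_add, hx, hy]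

lemma conjTensor_baseChange (f : M →ₗ[ℝ] N) (w : ℂ ⊗[ℝ] M) :
    conjTensor N (f.baseChange ℂ w) = f.baseChange ℂ (conjTensor M w) := by
  induction w using TensorProduct.induction_on with
  | zero => simp
  | tmul c m => simp
  | add x y hx hy => simp [hx, hy]

lemma baseChange_conjTensor_of_eigen {f : M →ₗ[ℝ] M} {c : ℂ} {w : ℂ ⊗[ℝ] M}
    (hw : f.baseChange ℂ w = c • w) :
    f.baseChange ℂ (conjTensor M w) = (starRingEnd ℂ c) • conjTensor M w := by
  rw [← conjTensor_baseChange, hw, conjTensor_smul]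

end conjTensor

section repComplexification

variable {g E : Type} [LieRing g] [LieAlgebra ℝ g] [AddCommGroup E] [Module ℝ E]
  (ρ : g →ₗ⁅ℝ⁆ Module.End ℝ E)

lemma repComplexification_tmul (c : ℂ) (x : g) (v : ℂ ⊗[ℝ] E) :
    repComplexification g E ρ (c ⊗ₜ[ℝ] x) v = c • (ρ x).baseChange ℂ v := by
  simp [repComplexification, LinearMap.liftBaseChange_tmul]

lemma conjTensor_repComplexification (X : ℂ ⊗[ℝ] g) (v : ℂ ⊗[ℝ] E) :
    conjTensor E (repComplexification g E ρ X v) =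
      repComplexification g E ρ (conjTensor g X) (conjTensor E v) := by
  induction X using TensorProduct.induction_on with
  | zero => simp
  | tmul c x =>
    simp only [repComplexification_tmul, conjTensor_tmul, conjTensor_smul,
      conjTensor_baseChange]
  | add x y hx hy => simp [hx, hy]

lemma repComplexification_lie (X Y : ℂ ⊗[ℝ] g) (v : ℂ ⊗[ℝ] E) :
    repComplexification g E ρ ⁅X, Y⁆ v =
      repComplexification g E ρ X (repComplexification g E ρ Y v) -
        repComplexification g E ρ Y (repComplexification g E ρ X v) := by
  induction X using TensorProduct.induction_on with
  | zero => simp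
  | add x₁ x₂ h₁ h₂ =>
    simp only [add_lie, map_add, LinearMap.add_apply, h₁, h₂]
    abel
  | tmul c x =>
    induction Y using TensorProduct.induction_on with
    | zero => rw [lie_zero (c ⊗ₜ[ℝ] x)]; simp
    | add y₁ y₂ h₁ h₂ =>
      rw [lie_add (c ⊗ₜ[ℝ] x)]
      simp only [map_add, LinearMap.add_apply, h₁, h₂]
      abel
    | tmul d y =>
      have hbracket : (⁅ρ x, ρ y⁆ : Module.End ℝ E) = ρ x ∘ₗ ρ y - ρ y ∘ₗ ρ x := rfl
      simp only [LieAlgebra.ExtendScalars.bracket_tmul, repComplexification_tmul,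
        LieHom.map_lie, hbracket, LinearMap.baseChange_sub, LinearMap.baseChange_comp,
        LinearMap.sub_apply, LinearMap.comp_apply, map_smul, smul_sub, smul_smul, mul_comm d c]

-- the complex conjugate of the integrability condition
lemma repComplexification_preserves_antiholomorphic {J : g →ₗ[ℝ] g} {I : Module.End ℝ E}
    (hint : ∀ (X : ℂ ⊗[ℝ] g) (v : ℂ ⊗[ℝ] E),
        J.baseChange ℂ X = Complex.I • X →
        I.baseChange ℂ v = Complex.I • v →
        I.baseChange ℂ (repComplexification g E ρ X v) =
          Complex.I • repComplexification g E ρ X v)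
    {X : ℂ ⊗[ℝ] g} {w : ℂ ⊗[ℝ] E}
    (hX : J.baseChange ℂ X = -(Complex.I • X))
    (hw : I.baseChange ℂ w = -(Complex.I • w)) :
    I.baseChange ℂ (repComplexification g E ρ X w) =
      -(Complex.I • repComplexification g E ρ X w) := by
  rw [← neg_smul] at hX hw ⊢
  have hX' := baseChange_conjTensor_of_eigen hX
  have hw' := baseChange_conjTensor_of_eigen hw
  simp only [map_neg, Complex.conj_I, neg_neg] at hX' hw'
  have h := baseChange_conjTensor_of_eigen (hint _ _ hX' hw')
  rwa [conjTensor_repComplexification, conjTensor_conjTensor, conjTensor_conjTensor,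
    Complex.conj_I] at h

end repComplexification

lemma baseChange_baseChange_of_sq_eq_neg {M : Type} [AddCommGroup M] [Module ℝ M]
    {f : M →ₗ[ℝ] M} (hf : ∀ m, f (f m) = -m) (w : ℂ ⊗[ℝ] M) :
    f.baseChange ℂ (f.baseChange ℂ w) = -w := by
  rw [← LinearMap.comp_apply, ← LinearMap.baseChange_comp,
    show f ∘ₗ f = -LinearMap.id from LinearMap.ext hf]
  simp

lemma sub_projection_mem_negI_eigenspace {W : Type} [AddCommGroup W] [Module ℂ W]
    {T : W →ₗ[ℂ] W} (hT : ∀ w, T (T w) = -w) {pr : W →ₗ[ℂ] W}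
    (hpr1 : ∀ v, T v = Complex.I • v → pr v = v)
    (hpr2 : ∀ v, T v = -(Complex.I • v) → pr v = 0) (w : W) :
    T (w - pr w) = -(Complex.I • (w - pr w)) := by
  set p := (2⁻¹ : ℂ) • (w - Complex.I • T w)
  set q := (2⁻¹ : ℂ) • (w + Complex.I • T w)
  have hp : T p = Complex.I • p := by
    simp only [p, map_smul, map_sub, hT]
    match_scalars <;> simp [Complex.ext_iff]
  have hq : T q = -(Complex.I • q) := by
    simp only [q, map_smul, map_add, hT]
    match_scalars <;> simp [Complex.ext_iff]
  have hpr : pr w = p := by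
    rw [show w = p + q by module, map_add, hpr1 p hp, hpr2 q hq, add_zero]
  rwa [hpr, show w - p = q by module]

theorem delta_is_representation_general
    (g E : Type) [LieRing g] [LieAlgebra ℝ g]
    [AddCommGroup E] [Module ℝ E]
    (J : g →ₗ[ℝ] g)
    (I : Module.End ℝ E) (hI : ∀ v : E, I (I v) = -v)
    (ρ : g →ₗ⁅ℝ⁆ Module.End ℝ E)
    -- integrability of the module: `g^{1,0}` preserves `E^{1,0}`
    (hint : ∀ (X : ℂ ⊗[ℝ] g) (v : ℂ ⊗[ℝ] E),
        J.baseChange ℂ X = Complex.I • X →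
        I.baseChange ℂ v = Complex.I • v →
        I.baseChange ℂ (repComplexification g E ρ X v) =
          Complex.I • repComplexification g E ρ X v)
    -- `pr` is the projection onto `E^{1,0}` along `E^{0,1}`
    (pr : (ℂ ⊗[ℝ] E) →ₗ[ℂ] (ℂ ⊗[ℝ] E))
    (hpr1 : ∀ v : ℂ ⊗[ℝ] E, I.baseChange ℂ v = Complex.I • v → pr v = v)
    (hpr2 : ∀ v : ℂ ⊗[ℝ] E, I.baseChange ℂ v = -(Complex.I • v) → pr v = 0) :
    ∀ (X Y : ℂ ⊗[ℝ] g) (V : ℂ ⊗[ℝ] E),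
      J.baseChange ℂ X = -(Complex.I • X) →
      J.baseChange ℂ Y = -(Complex.I • Y) →
      I.baseChange ℂ V = Complex.I • V →
      pr (repComplexification g E ρ ⁅X, Y⁆ V) =
        pr (repComplexification g E ρ X (pr (repComplexification g E ρ Y V))) -
        pr (repComplexification g E ρ Y (pr (repComplexification g E ρ X V))) := by
  intro X Y V hX hY _
  have pr_rep_pr : ∀ Z : ℂ ⊗[ℝ] g, J.baseChange ℂ Z = -(Complex.I • Z) →
      ∀ w, pr (repComplexification g E ρ Z (pr w)) = pr (repComplexification g E ρ Z w) := by
    intro Z hZ w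
    have h01 := repComplexification_preserves_antiholomorphic ρ hint hZ
      (sub_projection_mem_negI_eigenspace (baseChange_baseChange_of_sq_eq_neg hI) hpr1 hpr2 w)
    have h := hpr2 _ h01
    rwa [map_sub, map_sub, sub_eq_zero, eq_comm] at h
  rw [pr_rep_pr X hX, pr_rep_pr Y hY, ← map_sub, ← repComplexification_lie]

/-- Let `(g,J)` be a Lie algebra with integrable complex structure
and `(E,I)` an integrable `(g,J)`-module via `ρ` (i.e. `g^{1,0}` preserves
`E^{1,0}`).  Let `pr` be the projection of `E_ℂ` onto `E^{1,0}` along `E^{0,1}`.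
Then `δ(X̄,V) = pr(ρ(X̄)V)` is a Lie algebra representation of `g^{0,1}` on
`E^{1,0}`: `δ([X̄,Ȳ],V) = δ(X̄, δ(Ȳ,V)) − δ(Ȳ, δ(X̄,V))`. -/
theorem delta_is_representation
    (g E : Type) [LieRing g] [LieAlgebra ℝ g] [FiniteDimensional ℝ g]
    [AddCommGroup E] [Module ℝ E] [FiniteDimensional ℝ E]
    (J : g →ₗ[ℝ] g) (hJ : ∀ x : g, J (J x) = -x)
    (hNij : ∀ x y : g, ⁅x, y⁆ - ⁅J x, J y⁆ + J ⁅J x, y⁆ + J ⁅x, J y⁆ = 0)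
    (I : Module.End ℝ E) (hI : ∀ v : E, I (I v) = -v)
    (ρ : g →ₗ⁅ℝ⁆ Module.End ℝ E)
    -- integrability of the module: `g^{1,0}` preserves `E^{1,0}`
    (hint : ∀ (X : ℂ ⊗[ℝ] g) (v : ℂ ⊗[ℝ] E),
        J.baseChange ℂ X = Complex.I • X →
        I.baseChange ℂ v = Complex.I • v →
        I.baseChange ℂ (repComplexification g E ρ X v) =
          Complex.I • repComplexification g E ρ X v)
    -- `pr` is the projection onto `E^{1,0}` along `E^{0,1}`
    (pr : (ℂ ⊗[ℝ] E) →ₗ[ℂ] (ℂ ⊗[ℝ] E))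
    (hpr1 : ∀ v : ℂ ⊗[ℝ] E, I.baseChange ℂ v = Complex.I • v → pr v = v)
    (hpr2 : ∀ v : ℂ ⊗[ℝ] E, I.baseChange ℂ v = -(Complex.I • v) → pr v = 0) :
    ∀ (X Y : ℂ ⊗[ℝ] g) (V : ℂ ⊗[ℝ] E),
      J.baseChange ℂ X = -(Complex.I • X) →
      J.baseChange ℂ Y = -(Complex.I • Y) →
      I.baseChange ℂ V = Complex.I • V →
      pr (repComplexification g E ρ ⁅X, Y⁆ V) =
        pr (repComplexification g E ρ X (pr (repComplexification g E ρ Y V))) -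
        pr (repComplexification g E ρ Y (pr (repComplexification g E ρ X V))) :=
  delta_is_representation_general g E J I hI ρ hint pr hpr1 hpr2
end

section
/- Let (g,J) be a Lie algebra with complex structure. The coadjoint action of g on g* (given by (x·φ)(y) = −φ([x,y])) together with the dual complex structure makes g* an anti-integrable (g,J)-module; consequently g^{0,1} acts ℂ-linearly on (g*)^{1,0} = Λ^{1,0}g*, and the induced action on Λ^p Λ^{1,0}g* makes the complex (Λ^{p,•}g*, ∂̄) the Chevalley–Eilenberg complex computing H^q(g^{0,1}, Λ^{p,0}g*). -/
open TensorProduct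

/-- Let `(g,J)` be a Lie algebra with (integrable) complex
structure.  The coadjoint action `(X·φ)(y) = −φ([X,y])` makes the dual an
anti-integrable module: for every `X̄ ∈ g^{0,1}` and every functional
`φ ∈ (g*)^{1,0}` (i.e. annihilating `g^{0,1}`), the functional `X̄·φ` again
annihilates `g^{0,1}`; consequently `g^{0,1}` acts, and it acts as a Lie
algebra representation: `[X̄,Ȳ]·φ = X̄·(Ȳ·φ) − Ȳ·(X̄·φ)` (pointwise this is
the identity `φ([[X̄,Ȳ],w]) = φ([X̄,[Ȳ,w]]) − φ([Ȳ,[X̄,w]])`), so the complex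
`(Λ^{p,•}g*, ∂̄)` is the Chevalley–Eilenberg complex of this `g^{0,1}`-module. -/
theorem coadjoint_antiIntegrable_and_representation
    (g : Type) [LieRing g] [LieAlgebra ℝ g] [FiniteDimensional ℝ g]
    (J : g →ₗ[ℝ] g) (hJ : ∀ x : g, J (J x) = -x)
    (hNij : ∀ x y : g, ⁅x, y⁆ - ⁅J x, J y⁆ + J ⁅J x, y⁆ + J ⁅x, J y⁆ = 0) :
    (∀ (X : ℂ ⊗[ℝ] g) (φ : (ℂ ⊗[ℝ] g) →ₗ[ℂ] ℂ),
      J.baseChange ℂ X = -(Complex.I • X) →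
      (∀ w : ℂ ⊗[ℝ] g, J.baseChange ℂ w = -(Complex.I • w) → φ w = 0) →
      (∀ w : ℂ ⊗[ℝ] g, J.baseChange ℂ w = -(Complex.I • w) → -φ ⁅X, w⁆ = 0)) ∧
    (∀ (X Y : ℂ ⊗[ℝ] g) (φ : (ℂ ⊗[ℝ] g) →ₗ[ℂ] ℂ) (w : ℂ ⊗[ℝ] g),
      φ ⁅⁅X, Y⁆, w⁆ = φ ⁅X, ⁅Y, w⁆⁆ - φ ⁅Y, ⁅X, w⁆⁆) := by
  -- Bilinearity lemmas for the (raw `ExtendScalars`) bracket instance on `ℂ ⊗ g`,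
  -- stated in-context so that `rw` matches the instances appearing in the goal.
  have hadd₁ : ∀ (a b c : ℂ ⊗[ℝ] g), ⁅a + b, c⁆ = ⁅a, c⁆ + ⁅b, c⁆ := fun a b c => add_lie a b c
  have hadd₂ : ∀ (a b c : ℂ ⊗[ℝ] g), ⁅a, b + c⁆ = ⁅a, b⁆ + ⁅a, c⁆ := fun a b c => lie_add a b c
  have hz₁ : ∀ (a : ℂ ⊗[ℝ] g), ⁅a, (0 : ℂ ⊗[ℝ] g)⁆ = 0 := fun a => lie_zero a
  have hz₂ : ∀ (a : ℂ ⊗[ℝ] g), ⁅(0 : ℂ ⊗[ℝ] g), a⁆ = 0 := fun a => zero_lie a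
  have hs₁ : ∀ (z : ℂ) (a b : ℂ ⊗[ℝ] g), ⁅z • a, b⁆ = z • ⁅a, b⁆ := fun z a b => smul_lie z a b
  have hs₂ : ∀ (z : ℂ) (a b : ℂ ⊗[ℝ] g), ⁅a, z • b⁆ = z • ⁅a, b⁆ := fun z a b => lie_smul z a b
  have hn₁ : ∀ (a b : ℂ ⊗[ℝ] g), ⁅-a, b⁆ = -⁅a, b⁆ := fun a b => neg_lie a b
  have hn₂ : ∀ (a b : ℂ ⊗[ℝ] g), ⁅a, -b⁆ = -⁅a, b⁆ := fun a b => lie_neg a b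
  have hjac : ∀ (a b c : ℂ ⊗[ℝ] g), ⁅⁅a, b⁆, c⁆ = ⁅a, ⁅b, c⁆⁆ - ⁅b, ⁅a, c⁆⁆ :=
    fun a b c => lie_lie a b c
  set Jc := J.baseChange ℂ with hJc
  -- The complexified Nijenhuis identity.
  have hNijC : ∀ a b : ℂ ⊗[ℝ] g,
      ⁅a, b⁆ - ⁅Jc a, Jc b⁆ + Jc ⁅Jc a, b⁆ + Jc ⁅a, Jc b⁆ = 0 := by
    intro a b
    induction a using TensorProduct.induction_on with
    | zero => simp only [hz₂, map_zero, sub_zero, add_zero]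
    | tmul z x =>
      induction b using TensorProduct.induction_on with
      | zero => simp only [hz₁, map_zero, sub_zero, add_zero]
      | tmul z' y =>
        simp only [hJc, LinearMap.baseChange_tmul,
          LieAlgebra.ExtendScalars.bracket_tmul]
        rw [← TensorProduct.tmul_sub, ← TensorProduct.tmul_add,
          ← TensorProduct.tmul_add, hNij, TensorProduct.tmul_zero]
      | add b1 b2 h1 h2 =>
        simp only [map_add, hadd₂]
        calc _ = (⁅z ⊗ₜ[ℝ] x, b1⁆ - ⁅Jc (z ⊗ₜ[ℝ] x), Jc b1⁆ + Jc ⁅Jc (z ⊗ₜ[ℝ] x), b1⁆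
                  + Jc ⁅z ⊗ₜ[ℝ] x, Jc b1⁆)
               + (⁅z ⊗ₜ[ℝ] x, b2⁆ - ⁅Jc (z ⊗ₜ[ℝ] x), Jc b2⁆ + Jc ⁅Jc (z ⊗ₜ[ℝ] x), b2⁆
                  + Jc ⁅z ⊗ₜ[ℝ] x, Jc b2⁆) := by abel
          _ = 0 := by rw [h1, h2, add_zero]
    | add a1 a2 h1 h2 =>
      simp only [map_add, hadd₁]
      calc _ = (⁅a1, b⁆ - ⁅Jc a1, Jc b⁆ + Jc ⁅Jc a1, b⁆ + Jc ⁅a1, Jc b⁆)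
             + (⁅a2, b⁆ - ⁅Jc a2, Jc b⁆ + Jc ⁅Jc a2, b⁆ + Jc ⁅a2, Jc b⁆) := by abel
        _ = 0 := by rw [h1, h2, add_zero]
  constructor
  · intro X φ hX hφ w hw
    -- The bracket of two `(0,1)`-vectors is again of type `(0,1)`.
    have key : Jc ⁅X, w⁆ = -(Complex.I • ⁅X, w⁆) := by
      have h0 := hNijC X w
      have e1 : ⁅Jc X, Jc w⁆ = -⁅X, w⁆ := by
        rw [hX, hw, hn₁, hn₂, neg_neg, hs₁, hs₂, smul_smul, Complex.I_mul_I, neg_one_smul]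
      have e2 : Jc ⁅Jc X, w⁆ = -(Complex.I • Jc ⁅X, w⁆) := by
        rw [hX, hn₁, hs₁, map_neg, map_smul]
      have e3 : Jc ⁅X, Jc w⁆ = -(Complex.I • Jc ⁅X, w⁆) := by
        rw [hw, hn₂, hs₂, map_neg, map_smul]
      rw [e1, e2, e3, sub_neg_eq_add] at h0
      have h2 : ⁅X, w⁆ - Complex.I • Jc ⁅X, w⁆ = 0 := by
        have h1 : (2 : ℂ) • (⁅X, w⁆ - Complex.I • Jc ⁅X, w⁆) = 0 := by
          rw [smul_sub, two_smul, two_smul]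
          calc _ = ⁅X, w⁆ + ⁅X, w⁆ + -(Complex.I • Jc ⁅X, w⁆)
                   + -(Complex.I • Jc ⁅X, w⁆) := by abel
            _ = 0 := h0
        rcases smul_eq_zero.mp h1 with h | h
        · norm_num at h
        · exact h
      have h4 : ⁅X, w⁆ = Complex.I • Jc ⁅X, w⁆ := by rw [← sub_eq_zero]; exact h2
      calc Jc ⁅X, w⁆ = -(Complex.I • (Complex.I • Jc ⁅X, w⁆)) := by
            rw [smul_smul, Complex.I_mul_I, neg_one_smul, neg_neg]
        _ = -(Complex.I • ⁅X, w⁆) := by rw [← h4]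
    rw [hφ _ key, neg_zero]
  · intro X Y φ w
    rw [hjac, map_sub]
end

section
/- Let (g,J) be a Lie algebra with complex structure. The adjoint representation ad : g → End(g) is an integrable representation of (g,J) on (g,J) (i.e. [J, ad(Jx)] + J[ad x, J] = 0 for all x ∈ g) if and only if J is integrable (the Nijenhuis tensor of J vanishes). -/
/-! Evaluated at `y`, the operator `[J, ad(Jx)] + J∘[ad x, J]` is the Nijenhuis expression
`[x,y] - [Jx,Jy] + J[Jx,y] + J[x,Jy]`: expanding the commutators, the only term that is not
already of this form is `-J(J[x,y])`, which is `[x,y]` because `J² = -1`. -/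

theorem ad_integrability_operator_apply {R L : Type*} [CommRing R] [LieRing L] [LieAlgebra R L]
    (J : L →ₗ[R] L) (hJ : ∀ x : L, J (J x) = -x) (x y : L) :
    (⁅J, LieAlgebra.ad R L (J x)⁆ + J * ⁅LieAlgebra.ad R L x, J⁆) y =
      ⁅x, y⁆ - ⁅J x, J y⁆ + J ⁅J x, y⁆ + J ⁅x, J y⁆ := by
  simp only [LinearMap.add_apply, Module.End.mul_apply, Ring.lie_def, LinearMap.sub_apply,
    LieAlgebra.ad_apply, map_sub, hJ]
  abel

/-- For a real Lie algebra `g` with almost complex structure `J`,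
the adjoint representation is an integrable representation of `(g,J)` on
`(g,J)`, i.e. `[J, ad(Jx)] + J∘[ad(x), J] = 0` for all `x`, if and only if the
Nijenhuis tensor of `J` vanishes. -/
theorem ad_integrable_iff_nijenhuis_zero
    (g : Type) [LieRing g] [LieAlgebra ℝ g]
    (J : g →ₗ[ℝ] g) (hJ : ∀ x : g, J (J x) = -x) :
    (∀ x : g, ⁅J, LieAlgebra.ad ℝ g (J x)⁆ + J * ⁅LieAlgebra.ad ℝ g x, J⁆ = 0) ↔
    (∀ x y : g, ⁅x, y⁆ - ⁅J x, J y⁆ + J ⁅J x, y⁆ + J ⁅x, J y⁆ = 0) := by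
  refine forall_congr' fun x => ?_
  simp only [LinearMap.ext_iff, LinearMap.zero_apply, ad_integrability_operator_apply J hJ]
end

section
/- With compatible metrics chosen as above and H^{2n}(g_ℂ,ℂ) = ℂ, the antilinear operator ⋆̄_E maps harmonic elements to harmonic elements, inducing a ℂ-antilinear isomorphism ⋆̄_E : H^{p,q}_harm(g,E) → H^{n−p,n−q}_harm(g,E*). -/
/-- (`⋆̄_E` maps harmonic elements to harmonic elements and
induces a `ℂ`-antilinear isomorphism
`H^{p,q}_harm(g,E) ≅ H^{n−p,n−q}_harm(g,E*)`.)

We model the graded pieces of the two Dolbeault complexes: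
`A0,A1,A2 = Λ^{p,q-1},Λ^{p,q},Λ^{p,q+1}(g*)⊗E^{1,0}` with differentials
`dA0, dA1`, and `B0,B1,B2 = Λ^{n-p,n-q-1},Λ^{n-p,n-q},Λ^{n-p,n-q+1}(g*)⊗(E*)^{1,0}`
with differentials `dB0, dB1`.  The antilinear star operators
`s0,s1,s2` (from the `E`-side) and `t0,t1,t2` (from the `E*`-side) satisfy
`⋆̄_{E*}∘⋆̄_E = (−1)^{deg}` in every degree.  Harmonicity is with respect to
the Laplacian `Δ = ∂̄∂̄* + ∂̄*∂̄` where `∂̄* = −⋆̄∘∂̄∘⋆̄` (as in the paper,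
using `H^{2n}(g_ℂ,ℂ) = ℂ` so that `∂̄*` is the metric adjoint).  Then `s1`
maps harmonic elements to harmonic elements and restricts to a bijection
between the harmonic spaces. -/
theorem star_maps_harmonic_to_harmonic
    (p q : ℕ)
    (A0 A1 A2 B0 B1 B2 : Type)
    [AddCommGroup A0] [Module ℂ A0] [AddCommGroup A1] [Module ℂ A1]
    [AddCommGroup A2] [Module ℂ A2] [AddCommGroup B0] [Module ℂ B0]
    [AddCommGroup B1] [Module ℂ B1] [AddCommGroup B2] [Module ℂ B2]
    (dA0 : A0 →ₗ[ℂ] A1) (dA1 : A1 →ₗ[ℂ] A2)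
    (dB0 : B0 →ₗ[ℂ] B1) (dB1 : B1 →ₗ[ℂ] B2)
    (s0 : A0 →ₛₗ[starRingEnd ℂ] B2) (s1 : A1 →ₛₗ[starRingEnd ℂ] B1)
    (s2 : A2 →ₛₗ[starRingEnd ℂ] B0)
    (t0 : B0 →ₛₗ[starRingEnd ℂ] A2) (t1 : B1 →ₛₗ[starRingEnd ℂ] A1)
    (t2 : B2 →ₛₗ[starRingEnd ℂ] A0)
    -- star-star identities `⋆̄_{E*}∘⋆̄_E = (−1)^{degree}`
    (ht1s1 : ∀ a : A1, t1 (s1 a) = ((-1 : ℂ) ^ (p + q)) • a)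
    (hs1t1 : ∀ b : B1, s1 (t1 b) = ((-1 : ℂ) ^ (p + q)) • b)
    (ht0s2 : ∀ a : A2, t0 (s2 a) = ((-1 : ℂ) ^ (p + q + 1)) • a)
    (hs2t0 : ∀ b : B0, s2 (t0 b) = ((-1 : ℂ) ^ (p + q + 1)) • b)
    (ht2s0 : ∀ a : A0, t2 (s0 a) = ((-1 : ℂ) ^ (p + q + 1)) • a)
    (hs0t2 : ∀ b : B2, s0 (t2 b) = ((-1 : ℂ) ^ (p + q + 1)) • b) :
    -- `ΔA a = 0 → ΔB (⋆̄_E a) = 0`, and `⋆̄_E` is a bijection between the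
    -- harmonic spaces (it is antilinear by the type of `s1`).
    (∀ a : A1,
      dA0 (-(t2 (dB1 (s1 a)))) + (-(t1 (dB0 (s2 (dA1 a))))) = 0 →
      dB0 (-(s2 (dA1 (t1 (s1 a))))) + (-(s1 (dA0 (t2 (dB1 (s1 a)))))) = 0) ∧
    Set.BijOn s1
      {a : A1 | dA0 (-(t2 (dB1 (s1 a)))) + (-(t1 (dB0 (s2 (dA1 a))))) = 0}
      {b : B1 | dB0 (-(s2 (dA1 (t1 b)))) + (-(s1 (dA0 (t2 (dB1 b))))) = 0} := by

  set ε : ℂ := (-1 : ℂ) ^ (p + q) with hεdef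
  have hconj : (starRingEnd ℂ) ε = ε := by simp [hεdef]
  have hεsq : ε * ε = 1 := by
    rw [hεdef, ← pow_add, ← two_mul, pow_mul]; norm_num
  have key : ∀ a : A1,
      dB0 (-(s2 (dA1 (t1 (s1 a))))) + (-(s1 (dA0 (t2 (dB1 (s1 a)))))) =
      s1 (dA0 (-(t2 (dB1 (s1 a)))) + (-(t1 (dB0 (s2 (dA1 a)))))) := by
    intro a
    simp only [map_add, map_neg, ht1s1, hs1t1, map_smulₛₗ, LinearMap.map_smul,
      RingHom.id_apply, hconj, smul_neg]
    abel
  have key2 : ∀ b : B1,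
      dA0 (-(t2 (dB1 (s1 (t1 b))))) + (-(t1 (dB0 (s2 (dA1 (t1 b)))))) =
      t1 (dB0 (-(s2 (dA1 (t1 b)))) + (-(s1 (dA0 (t2 (dB1 b)))))) := by
    intro b
    simp only [map_add, map_neg, ht1s1, hs1t1, map_smulₛₗ, LinearMap.map_smul,
      RingHom.id_apply, hconj, smul_neg]
    abel
  have hsmul : ∀ a : A1,
      dA0 (-(t2 (dB1 (s1 (ε • a))))) + (-(t1 (dB0 (s2 (dA1 (ε • a)))))) =
      ε • (dA0 (-(t2 (dB1 (s1 a)))) + (-(t1 (dB0 (s2 (dA1 a)))))) := by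
    intro a
    simp only [map_smulₛₗ, LinearMap.map_smul, RingHom.id_apply, hconj, map_neg, smul_neg, smul_add]
  have hmain : ∀ a : A1,
      dA0 (-(t2 (dB1 (s1 a)))) + (-(t1 (dB0 (s2 (dA1 a))))) = 0 →
      dB0 (-(s2 (dA1 (t1 (s1 a))))) + (-(s1 (dA0 (t2 (dB1 (s1 a)))))) = 0 := by
    intro a ha
    rw [key a, ha, map_zero]
  refine ⟨hmain, ?_, ?_, ?_⟩
  · intro a ha
    exact hmain a ha
  · intro a _ a' _ h
    have h2 : ε • a = ε • a' := by
      rw [← ht1s1 a, ← ht1s1 a', h]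
    calc a = ε • (ε • a) := by rw [smul_smul, hεsq, one_smul]
    _ = ε • (ε • a') := by rw [h2]
    _ = a' := by rw [smul_smul, hεsq, one_smul]
  · intro b hb
    have hs : s1 (ε • t1 b) = b := by
      rw [map_smulₛₗ, hconj, hs1t1, smul_smul, hεsq, one_smul]
    refine ⟨ε • t1 b, ?_, hs⟩
    show dA0 (-(t2 (dB1 (s1 (ε • t1 b))))) +
        (-(t1 (dB0 (s2 (dA1 (ε • t1 b)))))) = 0
    rw [hsmul (t1 b), key2 b, hb, map_zero, smul_zero]
end
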